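/- arXiv:2103.15265 — 3 statements merged into one kernel-verified Lean document; each statement's English description precedes it below -/
import Mathlib

section
/- In a chinampa there is a unique pyramidion with maximum time (the spike): if (i,t) and (j,t) with i < j are both tops of maximal pyramids of secondary vertices and t is the maximum activation time, then i = j. -/
/-!
Orient every edge of the activation diagram upwards in time. Two upward edges leaving the same
vertex `(r, u)` end at `(r, u + 1)` and `(r + 1, u + 1)`; if both are activated, the activation
rule activates `(r + 1, u + 2)`, which closes the diamond. Hence the upward relation is
confluent, so any two vertices joined by a path in `S` have a common upper vertex in `S`. A
vertex of maximal time has no activated vertex strictly above it, so two of them are equal.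
-/

/-- Adjacency in an activation diagram: edges go from `(i,t)` to `(i,t+1)` and
from `(i,t)` to `(i-1,t-1)` (taken symmetrically). -/
def chinAdj (a b : ℤ × ℕ) : Prop :=
  (b.1 = a.1 ∧ b.2 = a.2 + 1) ∨ (a.1 = b.1 ∧ a.2 = b.2 + 1) ∨
    (b.1 = a.1 - 1 ∧ a.2 = b.2 + 1) ∨ (a.1 = b.1 - 1 ∧ b.2 = a.2 + 1)

/-- A pyramidion of the set `S` of activated vertices: an activated vertex
`(i,t)` such that neither `(i,t+1)` nor `(i+1,t+1)` is activated. -/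
def IsPyramidion (S : Set (ℤ × ℕ)) (i : ℤ) (t : ℕ) : Prop :=
  (i, t) ∈ S ∧ (i, t + 1) ∉ S ∧ (i + 1, t + 1) ∉ S

def UpEdge (S : Set (ℤ × ℕ)) (a b : ℤ × ℕ) : Prop :=
  a ∈ S ∧ b ∈ S ∧ b.2 = a.2 + 1 ∧ (b.1 = a.1 ∨ b.1 = a.1 + 1)

namespace UpEdge

open Relation

variable {S : Set (ℤ × ℕ)}

lemma of_chinAdj {a b : ℤ × ℕ} (h : chinAdj a b) (ha : a ∈ S) (hb : b ∈ S) :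
    UpEdge S a b ∨ UpEdge S b a := by
  unfold UpEdge
  rcases h with ⟨h1, h2⟩ | ⟨h1, h2⟩ | ⟨h1, h2⟩ | ⟨h1, h2⟩
  · exact .inl ⟨ha, hb, h2, .inl h1⟩
  · exact .inr ⟨hb, ha, h2, .inl h1⟩
  · exact .inr ⟨hb, ha, h2, .inr (by omega)⟩
  · exact .inl ⟨ha, hb, h2, .inr (by omega)⟩

lemma diamond (hclosed : ∀ r : ℤ, ∀ u : ℕ, (r, u) ∈ S → (r - 1, u) ∈ S → (r, u + 1) ∈ S)
    (a b c : ℤ × ℕ) (hab : UpEdge S a b) (hac : UpEdge S a c) :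
    ∃ d, ReflGen (UpEdge S) b d ∧ ReflTransGen (UpEdge S) c d := by
  obtain ⟨a₁, a₂⟩ := a
  obtain ⟨b₁, b₂⟩ := b
  obtain ⟨c₁, c₂⟩ := c
  obtain ⟨-, hb, rfl, hb₁⟩ := hab
  obtain ⟨-, hc, rfl, hc₁⟩ := hac
  dsimp only at hb₁ hc₁
  by_cases hbc : b₁ = c₁
  · subst hbc
    exact ⟨_, .refl, .refl⟩
  · have hd : (a₁ + 1, a₂ + 1 + 1) ∈ S := by
      have hboth : (a₁, a₂ + 1) ∈ S ∧ (a₁ + 1, a₂ + 1) ∈ S := by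
        rcases hb₁ with rfl | rfl <;> rcases hc₁ with rfl | rfl <;> simp_all
      exact hclosed _ _ hboth.2 (by simpa using hboth.1)
    refine ⟨_, .single ⟨hb, hd, rfl, ?_⟩, .single ⟨hc, hd, rfl, ?_⟩⟩ <;> dsimp only <;> omega

lemma join_of_reflTransGen_chinAdj
    (hclosed : ∀ r : ℤ, ∀ u : ℕ, (r, u) ∈ S → (r - 1, u) ∈ S → (r, u + 1) ∈ S) {a b : ℤ × ℕ}
    (h : ReflTransGen (fun x y => chinAdj x y ∧ x ∈ S ∧ y ∈ S) a b) :
    Join (ReflTransGen (UpEdge S)) a b := by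
  have hequiv := equivalence_join_reflTransGen (diamond hclosed)
  induction h with
  | refl => exact hequiv.refl a
  | tail _ hbc ih =>
    refine hequiv.trans ih ?_
    rcases of_chinAdj hbc.1 hbc.2.1 hbc.2.2 with h | h
    · exact ⟨_, .single h, .refl⟩
    · exact ⟨_, .refl, .single h⟩

lemma eq_of_reflTransGen_of_top {a c : ℤ × ℕ} (htop : ∀ p ∈ S, p.2 ≤ a.2)
    (h : ReflTransGen (UpEdge S) a c) : a = c := by
  rcases h.cases_head with h | ⟨x, hax, -⟩
  · exact h
  · have := htop x hax.2.1
    have := hax.2.2.1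
    omega

end UpEdge

theorem spike_unique_general (S : Set (ℤ × ℕ))
    (hclosed : ∀ r : ℤ, ∀ t : ℕ, (r, t) ∈ S → (r - 1, t) ∈ S → (r, t + 1) ∈ S)
    (hconn : ∀ a ∈ S, ∀ b ∈ S,
      Relation.ReflTransGen (fun x y => chinAdj x y ∧ x ∈ S ∧ y ∈ S) a b)
    (i j : ℤ) (t : ℕ)
    (hi : IsPyramidion S i t) (hj : IsPyramidion S j t)
    (hmax : ∀ p ∈ S, p.2 ≤ t) :
    i = j := by
  obtain ⟨c, hic, hjc⟩ := UpEdge.join_of_reflTransGen_chinAdj hclosed (hconn _ hi.1 _ hj.1)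
  have hij : ((i, t) : ℤ × ℕ) = (j, t) :=
    (UpEdge.eq_of_reflTransGen_of_top hmax hic).trans
      (UpEdge.eq_of_reflTransGen_of_top hmax hjc).symm
  exact congrArg Prod.fst hij

/-- Uniqueness of the spike: in a finite, connected set of activated vertices
closed under the activation rule (`(r,t)` and `(r-1,t)` activated imply
`(r,t+1)` activated), there is at most one pyramidion whose time is maximal
among all activated vertices. -/
theorem spike_unique (S : Set (ℤ × ℕ)) (hfin : S.Finite)
    (hclosed : ∀ r : ℤ, ∀ t : ℕ, (r, t) ∈ S → (r - 1, t) ∈ S → (r, t + 1) ∈ S)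
    (hconn : ∀ a ∈ S, ∀ b ∈ S,
      Relation.ReflTransGen (fun x y => chinAdj x y ∧ x ∈ S ∧ y ∈ S) a b)
    (i j : ℤ) (t : ℕ)
    (hi : IsPyramidion S i t) (hj : IsPyramidion S j t)
    (hmax : ∀ p ∈ S, p.2 ≤ t) :
    i = j :=
  spike_unique_general S hclosed hconn i j t hi hj hmax
end

section
/- If a subset S of vertices of a network is such that every vertex n ∈ S receives incoming edges from vertices n₁,…,n_k ∈ S whose total signal intensity meets or exceeds the threshold of n, and each vertex of S is externally activated during the time window [M − m_n, M] (where m_n is the maximal travel time of edges leaving n within S, and M = max over S of m_n), then every vertex of S is activated at every time t ≥ M (an infinite cascade). -/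
open scoped Classical

/-- Sufficient conditions for an infinite cascade. In a network with vertex
set `V`, directed edges `E`, positive travel times `time`, signal intensities
`intensity` and thresholds `threshold`, suppose `S` is a set of vertices such
that every `n ∈ S` has a set of in-neighbors inside `S` whose total intensity
meets its threshold. Let `m n` bound (from above) the travel times of edges
leaving `n` towards `S`, and `M` bound all the `m n`. If a vertex fires
whenever the signals arriving to it at that time meet its threshold, and every
`n ∈ S` is (externally) made to fire at every time in the window
`[M - m n, M]`, then every vertex of `S` fires at every time `t ≥ M`. -/
theorem infinite_cascade {V : Type*} [Fintype V]
    (E : V → V → Prop) (time : V → V → ℕ) (intensity : V → V → ℕ)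
    (threshold : V → ℕ) (fires : V → ℕ → Prop)
    (S : Finset V) (m : V → ℕ) (M : ℕ)
    (htime : ∀ u v : V, E u v → 1 ≤ time u v)
    (hm : ∀ n ∈ S, ∀ n' ∈ S, E n n' → time n n' ≤ m n)
    (hM : ∀ n ∈ S, m n ≤ M)
    (hthresh : ∀ n ∈ S, ∃ T : Finset V, (↑T : Set V) ⊆ ↑S ∧
      (∀ u ∈ T, E u n) ∧ threshold n ≤ ∑ u ∈ T, intensity u n)
    (hrule : ∀ v : V, ∀ t : ℕ,
      (∃ T : Finset V,
          (∀ u ∈ T, E u v ∧ time u v ≤ t ∧ fires u (t - time u v)) ∧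
          threshold v ≤ ∑ u ∈ T, intensity u v) →
      fires v t)
    (hwindow : ∀ n ∈ S, ∀ t : ℕ, M - m n ≤ t → t ≤ M → fires n t) :
    ∀ n ∈ S, ∀ t : ℕ, M ≤ t → fires n t := by
  intro n hn t
  induction t using Nat.strong_induction_on generalizing n with
  | _ t ih =>
    intro hMt
    rcases Nat.eq_or_lt_of_le hMt with h | h
    · exact hwindow n hn t (by omega) (by omega)
    · obtain ⟨T, hTS, hTE, hTth⟩ := hthresh n hn
      refine hrule n t ⟨T, fun u hu => ?_, hTth⟩
      have huS : u ∈ S := hTS hu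
      have hE := hTE u hu
      have htuv : time u n ≤ m u := hm u huS n hn hE
      have htM : time u n ≤ M := le_trans htuv (hM u huS)
      refine ⟨hE, le_trans htM (le_of_lt h), ?_⟩
      rcases le_or_gt M (t - time u n) with h1 | h1
      · exact ih (t - time u n)
          (Nat.sub_lt (lt_of_lt_of_le (Nat.lt_of_lt_of_le Nat.zero_lt_one (le_trans (htime u n hE) htM)) (le_of_lt h)) (htime u n hE)) u huS h1
      · refine hwindow u huS _ ?_ (le_of_lt h1)
        have : M - m u ≤ t - time u n := by omega
        exact this
end

section
/- The map e = incl ∘ proy on activation states is idempotent and proy is a retraction: e² = e and proy ∘ incl = id, where proy computes the activation closure and removes redundant primary vertices and incl keeps the non-redundant primary vertices. -/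
/-- A set of vertices is closed under the activation rule: if `(r,t)` and
`(r+1,t)` are activated then so is `(r+1,t+1)`. -/
def ActClosed (A : Set (ℕ × ℕ)) : Prop :=
  ∀ r t : ℕ, (r, t) ∈ A → (r + 1, t) ∈ A → (r + 1, t + 1) ∈ A

/-- `proy S`: the activation closure of `S`, the least set containing `S`
and closed under the activation rule. -/
def proy (S : Set (ℕ × ℕ)) : Set (ℕ × ℕ) :=
  {x | ∀ A : Set (ℕ × ℕ), S ⊆ A → ActClosed A → x ∈ A}

/-- A vertex of `A` is derivable (redundant) if it is produced by the
activation rule from two other vertices of `A`. -/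
def Derivable (A : Set (ℕ × ℕ)) (x : ℕ × ℕ) : Prop :=
  ∃ r t : ℕ, x = (r + 1, t + 1) ∧ (r, t) ∈ A ∧ (r + 1, t) ∈ A

/-- `incl A`: the non-redundant (primary) vertices of `A`, i.e. those not
derivable from other vertices of `A`. -/
def incl (A : Set (ℕ × ℕ)) : Set (ℕ × ℕ) :=
  {x ∈ A | ¬ Derivable A x}

lemma proy_closed (S : Set (ℕ × ℕ)) : ActClosed (proy S) := by
  intro r t h1 h2 A hSA hA
  exact hA r t (h1 A hSA hA) (h2 A hSA hA)

lemma subset_proy (S : Set (ℕ × ℕ)) : S ⊆ proy S := fun x hx A hSA _ => hSA hx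

lemma proy_incl_eq (A : Set (ℕ × ℕ)) (hA : ActClosed A) : proy (incl A) = A := by
  apply Set.Subset.antisymm
  · intro x hx
    exact hx A (fun y hy => hy.1) hA
  · have key : ∀ t r, (r, t) ∈ A → (r, t) ∈ proy (incl A) := by
      intro t
      induction t using Nat.strong_induction_on with
      | _ t ih =>
        intro r hr
        by_cases h : Derivable A (r, t)
        · obtain ⟨r', t', heq, h1, h2⟩ := h
          obtain ⟨hr', ht'⟩ := Prod.mk.injEq .. ▸ heq
          subst hr'; subst ht'
          exact proy_closed (incl A) r' t'
            (ih t' (Nat.lt_succ_self t') r' h1)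
            (ih t' (Nat.lt_succ_self t') (r' + 1) h2)
        · exact subset_proy _ ⟨hr, h⟩
    intro x hx
    exact key x.2 x.1 (by simpa using hx)

/-- `proy ∘ incl = id` on closed sets, and consequently
`e = incl ∘ proy` is idempotent: `e ∘ e = e`. -/
theorem proy_incl_retraction :
    (∀ A : Set (ℕ × ℕ), ActClosed A → proy (incl A) = A) ∧
      (∀ S : Set (ℕ × ℕ), incl (proy (incl (proy S))) = incl (proy S)) := by
  refine ⟨proy_incl_eq, fun S => ?_⟩
  rw [proy_incl_eq (proy S) (proy_closed S)]
end
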